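/- (Main theorem, explicit form.) For every natural number n ≥ 18 and every prime power q with q ≥ n · (log n)³, there exists a good coloring f : D × D → Fin n. (This good coloring yields a square representation of the relation algebra 𝔏(q,n), so 𝔏(q,n) is representable.) -/

import Mathlib

/-!
Put `f (u, z) = φ (u + z)` for a coloring `φ` of the plane `F × F`. Translations preserve every
slope relation, so `f` is good as soon as every nonzero difference `d` sees every ordered pair of
colors on some `(w, w + d)` and every punctured line sees every color. A uniformly random `φ` does
this with positive probability. A given punctured line misses a color with probability
`(1 - 1/n)^(q-1) ≤ exp (-(q-1)/n)`. For a given `d`, a maximal `W` with `W ∩ (W + d) = ∅` has at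
least `q²/3` points and gives independent pairs `(w, w + d)`, so a given pair of colors is missed
with probability at most `(1 - 1/n²)^(q²/3) ≤ exp (-q²/(3n²))`. For `n ≥ 18` and `q ≥ n (log n)³`
the union bound over the `q²n²` pair events and the `q²(q+1)n` line events is below `1`.
-/

/-- The "slope `s`" relation on the affine plane `F × F`.  `some s` is the
relation of lines with slope `s`; `none` is the relation `R_∞` of vertical lines. -/
def slopeRel {F : Type*} [Field F] (s : Option F) (p r : F × F) : Prop :=
  match s with
  | some s => p.1 ≠ r.1 ∧ r.2 - p.2 = s * (r.1 - p.1)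
  | none => p.1 = r.1 ∧ p.2 ≠ r.2

/-- A coloring `f : D × D → Fin n` (of the edges between `D = F × F` and a disjoint
copy of `D`) is good if it satisfies the witness conditions (1a), (1b), (2a), (2b)
needed to turn the standard representation of `𝔏(q,1)` into one of `𝔏(q,n)`. -/
def IsGood {F : Type*} [Field F] {n : ℕ} (f : (F × F) × (F × F) → Fin n) : Prop :=
  (∀ u v : F × F, u ≠ v → ∀ i j : Fin n, ∃ z : F × F, f (u, z) = i ∧ f (v, z) = j) ∧
  (∀ u v : F × F, u ≠ v → ∀ i j : Fin n, ∃ z : F × F, f (z, u) = i ∧ f (z, v) = j) ∧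
  (∀ u z : F × F, ∀ s : Option F, ∀ j : Fin n,
    ∃ w : F × F, slopeRel s u w ∧ f (w, z) = j) ∧
  (∀ u z : F × F, ∀ s : Option F, ∀ j : Fin n,
    ∃ w : F × F, slopeRel s z w ∧ f (u, w) = j)

open Finset Real

section Plane

variable {F : Type*} [Field F]

lemma slopeRel_add_right (s : Option F) (u w t : F × F) :
    slopeRel s (u + t) (w + t) ↔ slopeRel s u w := by
  cases s <;> simp [slopeRel]

open Classical in
lemma card_filter_slopeRel [Fintype F] (s : Option F) (u : F × F) :
    #{w | slopeRel s u w} = Fintype.card F - 1 := by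
  cases s with
  | some s =>
    have : ({w | slopeRel (some s) u w} : Finset (F × F)) =
        (univ.erase u.1).image fun t => (t, u.2 + s * (t - u.1)) := by
      ext ⟨a, b⟩
      simp [slopeRel, eq_comm (a := u.1), sub_eq_iff_eq_add', eq_comm (a := b)]
    rw [this, card_image_of_injective _ fun a b h => (Prod.ext_iff.1 h).1,
      card_erase_of_mem (mem_univ _), card_univ]
  | none =>
    have : ({w | slopeRel none u w} : Finset (F × F)) =
        (univ.erase u.2).image fun t => (u.1, t) := by
      ext ⟨a, b⟩
      simp [slopeRel, eq_comm (a := u.1), eq_comm (a := u.2), and_comm]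
    rw [this, card_image_of_injective _ fun a b h => (Prod.ext_iff.1 h).2,
      card_erase_of_mem (mem_univ _), card_univ]

def IsGoodPlaneColoring {n : ℕ} (φ : F × F → Fin n) : Prop :=
  (∀ d ≠ 0, ∀ i j : Fin n, ∃ w, φ w = i ∧ φ (w + d) = j) ∧
  (∀ (u : F × F) (s : Option F) (j : Fin n), ∃ w, slopeRel s u w ∧ φ w = j)

theorem IsGoodPlaneColoring.isGood {n : ℕ} {φ : F × F → Fin n} (hφ : IsGoodPlaneColoring φ) :
    IsGood fun p : (F × F) × (F × F) => φ (p.1 + p.2) := by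
  have h1 : ∀ u v : F × F, u ≠ v → ∀ i j, ∃ z, φ (u + z) = i ∧ φ (v + z) = j := by
    intro u v huv i j
    obtain ⟨w, hwi, hwj⟩ := hφ.1 (v - u) (sub_ne_zero.2 huv.symm) i j
    exact ⟨w - u, by rwa [add_sub_cancel], by convert hwj using 2; abel⟩
  have h2 : ∀ (u z : F × F) s j, ∃ w, slopeRel s u w ∧ φ (w + z) = j := by
    intro u z s j
    obtain ⟨w, hw, hwj⟩ := hφ.2 (u + z) s j
    exact ⟨w - z, (slopeRel_add_right s u (w - z) z).1 (by rwa [sub_add_cancel]),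
      by rwa [sub_add_cancel]⟩
  refine ⟨h1, fun u v huv i j => ?_, h2, fun u z s j => ?_⟩
  · simpa only [add_comm _ u, add_comm _ v] using h1 u v huv i j
  · simpa only [add_comm u] using h2 z u s j

end Plane

section Counting

lemma exists_shiftFree_finset {G : Type*} [AddGroup G] [Fintype G] [DecidableEq G] {d : G}
    (hd : d ≠ 0) : ∃ W : Finset G, (∀ w ∈ W, w + d ∉ W) ∧ Fintype.card G ≤ 3 * #W := by
  obtain ⟨W, hWfree, hWmax⟩ := exists_max_image {W : Finset G | ∀ w ∈ W, w + d ∉ W} card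
    ⟨∅, by simp⟩
  rw [mem_filter] at hWfree
  refine ⟨W, hWfree.2, ?_⟩
  have hcover : (univ : Finset G) ⊆ W ∪ W.image (· - d) ∪ W.image (· + d) := by
    intro x _
    by_cases hx : x ∈ W
    · simp [hx]
    have hnot : ¬∀ w ∈ insert x W, w + d ∉ insert x W := fun h => by
      have := hWmax (insert x W) (by simpa using h)
      rw [card_insert_of_notMem hx] at this
      omega
    push Not at hnot
    obtain ⟨w, hw, hwd⟩ := hnot
    rcases mem_insert.1 hw with rfl | hw
    · rcases mem_insert.1 hwd with h | h
      · exact absurd (add_eq_left.1 h) hd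
      · exact mem_union_left _ <| mem_union_right _ <|
          mem_image.2 ⟨w + d, h, add_sub_cancel_right w d⟩
    · rcases mem_insert.1 hwd with h | h
      · exact mem_union_right _ (mem_image.2 ⟨w, hw, h⟩)
      · exact absurd h (hWfree.2 w hw)
  calc Fintype.card G = #(univ : Finset G) := card_univ.symm
    _ ≤ #(W ∪ W.image (· - d) ∪ W.image (· + d)) := card_le_card hcover
    _ ≤ #W + #W + #W := by
      grw [card_union_le, card_union_le, card_image_le, card_image_le]
    _ = 3 * #W := by ring

variable {D : Type*} [Fintype D] [DecidableEq D] {n : ℕ}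

lemma card_filter_forall_ne_mul_pow (S : Finset D) (j : Fin n) :
    #{φ : D → Fin n | ∀ w ∈ S, φ w ≠ j} * n ^ #S = (n - 1) ^ #S * n ^ Fintype.card D := by
  have hS : ({φ : D → Fin n | ∀ w ∈ S, φ w ≠ j} : Finset _) =
      Fintype.piFinset fun w => if w ∈ S then ({j}ᶜ : Finset (Fin n)) else univ := by
    ext φ
    simp only [mem_filter, mem_univ, true_and, Fintype.mem_piFinset]
    refine forall_congr' fun w => ?_
    split_ifs <;> simp [*]
  have hcard : ∀ w, #(if w ∈ S then ({j}ᶜ : Finset (Fin n)) else univ) =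
      if w ∈ S then n - 1 else n := by
    intro w
    split_ifs <;> simp [card_compl]
  rw [hS, Fintype.card_piFinset]
  simp only [hcard]
  rw [prod_ite, prod_const, prod_const, mul_assoc, ← pow_add, ← compl_filter,
    filter_mem_eq_inter, univ_inter, card_compl_add_card]

lemma card_filter_forall_not_and_mul_pow_le [AddGroup D] {W : Finset D} {d : D}
    (hW : ∀ w ∈ W, w + d ∉ W) (i j : Fin n) :
    #{φ : D → Fin n | ∀ w ∈ W, ¬(φ w = i ∧ φ (w + d) = j)} * (n ^ 2) ^ #W ≤
      (n ^ 2 - 1) ^ #W * n ^ Fintype.card D := by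
  have hdisj : Disjoint W (W.image (· + d)) :=
    disjoint_left.2 fun x hx hx' => by
      obtain ⟨w, hw, rfl⟩ := mem_image.1 hx'
      exact hW w hw hx
  have hR : #(W ∪ W.image (· + d))ᶜ + 2 * #W = Fintype.card D := by
    rw [← card_compl_add_card (W ∪ W.image (· + d)), card_union_of_disjoint hdisj,
      card_image_of_injective _ (add_left_injective d), two_mul]
  set R : Finset D := (W ∪ W.image (· + d))ᶜ
  -- a coloring is determined by its values on the pairs `(w, w + d)` and on the rest `R`
  let Ψ : (D → Fin n) → (W → Fin n × Fin n) × (R → Fin n) :=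
    fun φ => (fun w => (φ w, φ (w + d)), fun x => φ x)
  let T : Finset ((W → Fin n × Fin n) × (R → Fin n)) :=
    Fintype.piFinset (fun _ => {(i, j)}ᶜ) ×ˢ univ
  set A : Finset (D → Fin n) := {φ | ∀ w ∈ W, ¬(φ w = i ∧ φ (w + d) = j)}
  have hmaps : Set.MapsTo Ψ A T := by
    intro φ hφ
    simp only [A, mem_coe, mem_filter, mem_univ, true_and] at hφ
    simp only [T, Ψ, mem_coe, mem_product, Fintype.mem_piFinset, mem_compl, mem_singleton,
      Prod.mk.injEq, mem_univ, and_true]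
    exact fun w => hφ w w.2
  have hinj : Set.InjOn Ψ A := by
    intro φ _ φ' _ h
    simp only [Ψ, Prod.mk.injEq, funext_iff, Subtype.forall] at h
    funext x
    by_cases hx : x ∈ W
    · exact (h.1 x hx).1
    by_cases hx' : x - d ∈ W
    · simpa using (h.1 (x - d) hx').2
    · refine h.2 x ?_
      simp only [R, mem_compl, mem_union, mem_image, not_or, not_exists, not_and]
      exact ⟨hx, fun w hw hwx => hx' (by rwa [← hwx, add_sub_cancel_right])⟩
  have hT : #T = (n ^ 2 - 1) ^ #W * n ^ #R := by
    simp [T, card_compl, sq]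
  calc _ ≤ #T * (n ^ 2) ^ #W := Nat.mul_le_mul_right _ (card_le_card_of_injOn Ψ hmaps hinj)
    _ = (n ^ 2 - 1) ^ #W * n ^ Fintype.card D := by
      rw [hT, ← hR, pow_add, pow_mul]; ring

lemma le_mul_exp_neg_of_mul_pow_le {c m k N : ℕ} (hm : 0 < m)
    (h : c * m ^ k ≤ (m - 1) ^ k * N) :
    (c : ℝ) ≤ N * exp (-(k / m)) := by
  have hm' : (0 : ℝ) < m := by exact_mod_cast hm
  have hbase : ((m - 1 : ℕ) : ℝ) ≤ m * exp (-(1 / m)) := by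
    calc ((m - 1 : ℕ) : ℝ) = m * (-(1 / m) + 1) := by
          rw [Nat.cast_sub hm, Nat.cast_one]; field_simp; ring
      _ ≤ m * exp (-(1 / m)) := by gcongr; exact add_one_le_exp _
  have hpow : ((m - 1 : ℕ) : ℝ) ^ k ≤ (m : ℝ) ^ k * exp (-(k / m)) := by
    calc ((m - 1 : ℕ) : ℝ) ^ k ≤ (m * exp (-(1 / m))) ^ k := by gcongr
      _ = (m : ℝ) ^ k * exp (-(k / m)) := by
          rw [mul_pow, ← exp_nat_mul]; ring_nf
  have hc : (c : ℝ) * m ^ k ≤ (m : ℝ) ^ k * (N * exp (-(k / m))) := by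
    calc (c : ℝ) * m ^ k ≤ ((m - 1 : ℕ) : ℝ) ^ k * N := by exact_mod_cast h
      _ ≤ (m : ℝ) ^ k * exp (-(k / m)) * N := by gcongr
      _ = (m : ℝ) ^ k * (N * exp (-(k / m))) := by ring
  rw [mul_comm] at hc
  exact le_of_mul_le_mul_left hc (by positivity)

lemma card_filter_forall_imp_ne_le_exp (p : D → Prop) [DecidablePred p] (j : Fin n) :
    (#{φ : D → Fin n | ∀ w, p w → φ w ≠ j} : ℝ) ≤
      n ^ Fintype.card D * exp (-(#{w | p w} / n)) := by
  have := card_filter_forall_ne_mul_pow {w | p w} j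
  simp only [mem_filter, mem_univ, true_and] at this
  exact_mod_cast le_mul_exp_neg_of_mul_pow_le j.pos this.le

lemma card_filter_forall_not_and_le_exp {G : Type*} [AddGroup G] [Fintype G] [DecidableEq G]
    {d : G} (hd : d ≠ 0) (i j : Fin n) :
    (#{φ : G → Fin n | ∀ w, ¬(φ w = i ∧ φ (w + d) = j)} : ℝ) ≤
      n ^ Fintype.card G * exp (-(Fintype.card G / (3 * n ^ 2))) := by
  obtain ⟨W, hW, hW3⟩ := exists_shiftFree_finset hd
  have hsub : ({φ : G → Fin n | ∀ w, ¬(φ w = i ∧ φ (w + d) = j)} : Finset _) ⊆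
      ({φ | ∀ w ∈ W, ¬(φ w = i ∧ φ (w + d) = j)} : Finset (G → Fin n)) := by
    intro φ hφ
    simp only [mem_filter, mem_univ, true_and] at hφ ⊢
    exact fun w _ => hφ w
  have hcount := (Nat.mul_le_mul_right _ (card_le_card hsub)).trans
    (card_filter_forall_not_and_mul_pow_le hW i j)
  have hn : (0 : ℝ) < n := by exact_mod_cast i.pos
  calc _ ≤ (n ^ Fintype.card G : ℕ) * exp (-(#W / (n ^ 2 : ℕ))) :=
        le_mul_exp_neg_of_mul_pow_le (pow_pos i.pos 2) hcount
    _ ≤ n ^ Fintype.card G * exp (-(Fintype.card G / (3 * n ^ 2))) := by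
        push_cast
        gcongr _ * exp (-?_)
        rw [div_le_div_iff₀ (by positivity) (by positivity)]
        have : (Fintype.card G : ℝ) ≤ 3 * #W := by exact_mod_cast hW3
        nlinarith

end Counting

section Estimates

lemma log_eighteen_gt : 2.88 < log 18 := by
  have h : log 18 = log 2 + 2 * log 3 := by
    rw [show (18 : ℝ) = 2 * 3 ^ 2 by norm_num, log_mul (by norm_num) (by norm_num), log_pow]
    norm_num
  linarith [log_two_gt_d9, log_three_gt_d9]

lemma four_mul_add_nine_mul_log_add_le_cube {L : ℝ} (hL : 2.88 ≤ L) :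
    4 * L + 9 * log L + 2 + 1 / 18 ≤ L ^ 3 := by
  have hlog : log L ≤ L / 3 - 1 + log 3 := by
    have := log_le_sub_one_of_pos (x := L / 3) (by linarith)
    rw [log_div (by linarith) (by norm_num)] at this
    linarith
  nlinarith [log_three_lt_d9, mul_nonneg (mul_nonneg (sub_nonneg.2 hL) (sub_nonneg.2 hL))
    (sub_nonneg.2 hL)]

lemma three_mul_log_add_log_add_two_le {N Q : ℝ} (hN : 18 ≤ N) (hQ : N * log N ^ 3 ≤ Q) :
    3 * log Q + log N + 2 ≤ (Q - 1) / N := by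
  set L := log N
  have hL : 2.88 ≤ L := log_eighteen_gt.le.trans (log_le_log (by norm_num) hN)
  have hL3 : 23 ≤ L ^ 3 := le_trans (by norm_num) (pow_le_pow_left₀ (by norm_num) hL 3)
  have hN0 : 0 < N := by linarith
  set Q₀ := N * L ^ 3
  have hQ₀ : 3 * N ≤ Q₀ := by nlinarith
  have hQ₀pos : 0 < Q₀ := by linarith
  have hQpos : 0 < Q := by linarith
  have hlogQ₀ : log Q₀ = L + 3 * log L := by
    rw [log_mul hN0.ne' (by positivity), log_pow]; push_cast; ring
  -- `(Q - 1) / N - 3 log Q` is increasing for `Q ≥ 3N`, so it suffices to look at `Q = Q₀`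
  have hlogQ : 3 * log Q ≤ 3 * log Q₀ + (Q - Q₀) / N := by
    have h := log_le_sub_one_of_pos (x := Q / Q₀) (by positivity)
    rw [log_div (by positivity) (by positivity), div_sub_one (by positivity)] at h
    have : 3 * ((Q - Q₀) / Q₀) ≤ (Q - Q₀) / N := by
      rw [← mul_div_assoc, div_le_div_iff₀ (by positivity) hN0]
      nlinarith [sub_nonneg.2 hQ]
    linarith
  have hcube := four_mul_add_nine_mul_log_add_le_cube hL
  have hN18 : 1 / N ≤ 1 / 18 := one_div_le_one_div_of_le (by norm_num) hN
  have hsplit : (Q - 1) / N = L ^ 3 - 1 / N + (Q - Q₀) / N := by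
    field_simp
    ring
  linarith

lemma mul_exp_neg_le_one {x y : ℝ} (hy : 0 < y) (h : log y ≤ x) : y * exp (-x) ≤ 1 := by
  rw [← exp_log hy, ← exp_add, exp_le_one_iff]
  linarith

lemma two_mul_exp_neg_two_add_exp_neg_one_lt_one : 2 * exp (-2) + exp (-1) < 1 := by
  have he : exp (-1) < 0.3679 := by
    rw [exp_neg, inv_lt_comm₀ (exp_pos 1) (by norm_num)]
    linarith [exp_one_gt_d9]
  have h2 : exp (-2) = exp (-1) ^ 2 := by rw [← exp_nat_mul]; norm_num
  nlinarith [exp_pos (-1)]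

lemma union_bound_lt_one {N Q : ℝ} (hN : 18 ≤ N) (hQ : N * log N ^ 3 ≤ Q) :
    Q ^ 2 * N ^ 2 * exp (-(Q ^ 2 / (3 * N ^ 2))) +
      Q ^ 2 * (Q + 1) * N * exp (-((Q - 1) / N)) < 1 := by
  have hN0 : 0 < N := by linarith
  have hL : 2.88 ≤ log N := log_eighteen_gt.le.trans (log_le_log (by norm_num) hN)
  have hL3 : 23 ≤ log N ^ 3 := le_trans (by norm_num) (pow_le_pow_left₀ (by norm_num) hL 3)
  have hQN : 23 * N ≤ Q := by nlinarith
  have hQ0 : 0 < Q := by linarith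
  have hlogQ : 0 ≤ log Q := log_nonneg (by linarith)
  have hstar := three_mul_log_add_log_add_two_le hN hQ
  have hpairs : Q ^ 2 * N ^ 2 * exp (-(Q ^ 2 / (3 * N ^ 2))) ≤ exp (-1) := by
    have hlog : log (Q ^ 4 * exp 1) ≤ Q ^ 2 / (3 * N ^ 2) := by
      rw [log_mul (by positivity) (exp_pos 1).ne', log_pow, log_exp,
        le_div_iff₀ (by positivity)]
      rw [le_div_iff₀ hN0] at hstar
      push_cast
      nlinarith [mul_le_mul_of_nonneg_left hstar (by linarith : (0 : ℝ) ≤ 23 * N)]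
    have := mul_exp_neg_le_one (by positivity) hlog
    calc Q ^ 2 * N ^ 2 * exp (-(Q ^ 2 / (3 * N ^ 2)))
        ≤ Q ^ 2 * Q ^ 2 * exp (-(Q ^ 2 / (3 * N ^ 2))) := by
          gcongr
          linarith
      _ = exp (-1) * (Q ^ 4 * exp 1 * exp (-(Q ^ 2 / (3 * N ^ 2)))) := by
          rw [exp_neg 1]; field_simp
      _ ≤ exp (-1) := mul_le_of_le_one_right (exp_pos _).le this
  have hlines : Q ^ 2 * (Q + 1) * N * exp (-((Q - 1) / N)) ≤ 2 * exp (-2) := by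
    have hlog : log (Q ^ 3 * N * exp 2) ≤ (Q - 1) / N := by
      rw [log_mul (by positivity) (exp_pos 2).ne', log_mul (by positivity) hN0.ne', log_pow,
        log_exp]
      push_cast
      linarith
    have := mul_exp_neg_le_one (by positivity) hlog
    calc Q ^ 2 * (Q + 1) * N * exp (-((Q - 1) / N))
        = (Q + 1) / Q * exp (-2) * (Q ^ 3 * N * exp 2 * exp (-((Q - 1) / N))) := by
          rw [exp_neg 2]; field_simp
      _ ≤ 2 * exp (-2) * 1 := by
          gcongr
          rw [div_le_iff₀ hQ0]
          linarith
      _ = 2 * exp (-2) := mul_one _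
  linarith [two_mul_exp_neg_two_add_exp_neg_one_lt_one]

end Estimates

lemma card_biUnion_le_card_mul_of_le {ι α : Type*} [DecidableEq α] {s : Finset ι}
    {B : ι → Finset α} {b : ℝ} (h : ∀ i ∈ s, (#(B i) : ℝ) ≤ b) :
    (#(s.biUnion B) : ℝ) ≤ #s * b :=
  calc (#(s.biUnion B) : ℝ) ≤ ∑ i ∈ s, (#(B i) : ℝ) := by exact_mod_cast card_biUnion_le
    _ ≤ #s * b := by simpa using sum_le_card_nsmul s _ b h

lemma exists_forall_notMem_of_card_mul_add_card_mul_lt {α ι κ : Type*} [Fintype α]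
    [DecidableEq α] {s : Finset ι} {t : Finset κ} {A : ι → Finset α} {B : κ → Finset α} {a b : ℝ}
    (hA : ∀ i ∈ s, (#(A i) : ℝ) ≤ a) (hB : ∀ k ∈ t, (#(B k) : ℝ) ≤ b)
    (h : #s * a + #t * b < Fintype.card α) :
    ∃ x, (∀ i ∈ s, x ∉ A i) ∧ ∀ k ∈ t, x ∉ B k := by
  have hcard : #(s.biUnion A ∪ t.biUnion B) < #(univ : Finset α) := by
    have : (#(s.biUnion A ∪ t.biUnion B) : ℝ) < Fintype.card α :=
      calc _ ≤ (#(s.biUnion A) : ℝ) + #(t.biUnion B) := by exact_mod_cast card_union_le _ _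
        _ < Fintype.card α := by
          linarith [card_biUnion_le_card_mul_of_le hA, card_biUnion_le_card_mul_of_le hB]
    rw [card_univ]
    exact_mod_cast this
  obtain ⟨x, -, hx⟩ := exists_mem_notMem_of_card_lt_card hcard
  simp only [mem_union, mem_biUnion, not_or, not_exists, not_and] at hx
  exact ⟨x, hx⟩

theorem exists_isGoodPlaneColoring {n q : ℕ} (hn : 18 ≤ n) (hqn : (n : ℝ) * log n ^ 3 ≤ q)
    {F : Type*} [Field F] [Fintype F] (hcard : Fintype.card F = q) :
    ∃ φ : F × F → Fin n, IsGoodPlaneColoring φ := by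
  classical
  have hD : Fintype.card (F × F) = q ^ 2 := by rw [Fintype.card_prod, hcard, sq]
  let P : Finset ((F × F) × Fin n × Fin n) := {t | t.1 ≠ 0}
  let missesPair : (F × F) × Fin n × Fin n → Finset (F × F → Fin n) :=
    fun t => {φ | ∀ w, ¬(φ w = t.2.1 ∧ φ (w + t.1) = t.2.2)}
  let missesOnLine : (F × F) × Option F × Fin n → Finset (F × F → Fin n) :=
    fun t => {φ | ∀ w, slopeRel t.2.1 t.1 w → φ w ≠ t.2.2}
  have hpair : ∀ t ∈ P, (#(missesPair t) : ℝ) ≤ n ^ q ^ 2 * exp (-(q ^ 2 / (3 * n ^ 2))) := by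
    rintro ⟨d, i, j⟩ hd
    have := card_filter_forall_not_and_le_exp (by simpa [P] using hd) i j
    rwa [hD, Nat.cast_pow] at this
  have hline : ∀ t ∈ univ, (#(missesOnLine t) : ℝ) ≤ n ^ q ^ 2 * exp (-((q - 1) / n)) := by
    rintro ⟨u, s, j⟩ -
    have := card_filter_forall_imp_ne_le_exp (slopeRel s u) j
    rwa [card_filter_slopeRel, hD, hcard, Nat.cast_sub (hcard ▸ Fintype.card_pos),
      Nat.cast_one] at this
  have hP : (#P : ℝ) ≤ q ^ 2 * n ^ 2 := by
    have := card_le_univ P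
    simp only [Fintype.card_prod, Fintype.card_fin, hcard] at this
    exact_mod_cast this.trans_eq (by ring)
  have hlines : (#(univ : Finset ((F × F) × Option F × Fin n)) : ℝ) = q ^ 2 * (q + 1) * n := by
    simp [hcard]
    ring
  have hΩ : (Fintype.card (F × F → Fin n) : ℝ) = n ^ q ^ 2 := by simp [hD]
  have hsmall := union_bound_lt_one (N := n) (Q := q) (by exact_mod_cast hn) hqn
  obtain ⟨φ, hφpair, hφline⟩ := exists_forall_notMem_of_card_mul_add_card_mul_lt hpair hline (by
    have hX : 0 ≤ (n : ℝ) ^ q ^ 2 * exp (-(q ^ 2 / (3 * n ^ 2))) := by positivity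
    have := mul_lt_mul_of_pos_left hsmall (by positivity : (0 : ℝ) < n ^ q ^ 2)
    rw [hlines, hΩ]
    nlinarith [mul_le_mul_of_nonneg_right hP hX])
  refine ⟨φ, fun d hd i j => ?_, fun u s j => ?_⟩
  · by_contra h
    exact hφpair (d, i, j) (mem_filter.2 ⟨mem_univ _, hd⟩) (by simpa [missesPair] using h)
  · by_contra h
    exact hφline (u, s, j) (mem_univ _) (by simpa [missesOnLine] using h)

theorem stmt14_general (n : ℕ) (hn : 18 ≤ n) (q : ℕ)
    (hqn : (n : ℝ) * Real.log n ^ 3 ≤ q)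
    (F : Type*) [Field F] [Fintype F] (hcard : Fintype.card F = q) :
    ∃ f : (F × F) × (F × F) → Fin n, IsGood f := by
  obtain ⟨φ, hφ⟩ := exists_isGoodPlaneColoring hn hqn hcard
  exact ⟨_, hφ.isGood⟩

/-- Main theorem, explicit form: for every `n ≥ 18` and every prime power
`q ≥ n (log n)³`, a good coloring `f : D × D → Fin n` exists (yielding a
representation of `𝔏(q,n)`). -/
theorem stmt14 (n : ℕ) (hn : 18 ≤ n) (q : ℕ) (hq : IsPrimePow q)
    (hqn : (n : ℝ) * Real.log n ^ 3 ≤ q)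
    (F : Type*) [Field F] [Fintype F] (hcard : Fintype.card F = q) :
    ∃ f : (F × F) × (F × F) → Fin n, IsGood f :=
  stmt14_general n hn q hqn F hcard
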